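/- Let h(t) = (h_{α\bar β}(t)) be a smooth family of positive definite Hermitian matrices on ℂ^m, and ρ(t,z) = Σ h_{α\bar β}(t)z^α\bar z^β − 1. Then the geodesic curvature of the family of unit-sphere boundaries equals θ_{j\bar k}(ρ) = Σ_{α,β} (h_{α\bar β, j\bar k} − Σ_{λ,ν} h_{α\bar λ, j} h^{\bar λ ν} h_{ν\bar β, \bar k}) z^α \bar z^β, where h_{α\bar β, j} = ∂h_{α\bar β}/∂t^j etc. and (h^{\bar λ ν}) is the inverse of (h_{ν \bar λ}). -/

import Mathlib

open scoped ComplexOrder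

namespace Stmt11

/-- Wirtinger derivative ∂f in complex direction `v` at `p`. -/
noncomputable def wirt {E : Type*} [NormedAddCommGroup E] [NormedSpace ℂ E]
    (f : E → ℂ) (v : E) (p : E) : ℂ :=
  (fderiv ℝ f p v - Complex.I * fderiv ℝ f p (Complex.I • v)) / 2

/-- Conjugate Wirtinger derivative ∂̄f in direction `v` at `p`. -/
noncomputable def wirtBar {E : Type*} [NormedAddCommGroup E] [NormedSpace ℂ E]
    (f : E → ℂ) (v : E) (p : E) : ℂ :=
  (fderiv ℝ f p v + Complex.I * fderiv ℝ f p (Complex.I • v)) / 2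

variable {m n : ℕ}

def et (j : Fin m) : (Fin m → ℂ) × (Fin n → ℂ) := (Pi.single j 1, 0)

def ez (α : Fin n) : (Fin m → ℂ) × (Fin n → ℂ) := (0, Pi.single α 1)

/-- ρ_α -/
noncomputable def dza (ρ : (Fin m → ℂ) × (Fin n → ℂ) → ℝ) (α : Fin n) :
    (Fin m → ℂ) × (Fin n → ℂ) → ℂ :=
  wirt (fun q => (ρ q : ℂ)) (ez α)

/-- ρ_{ᾱ} -/
noncomputable def dzbar (ρ : (Fin m → ℂ) × (Fin n → ℂ) → ℝ) (α : Fin n) :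
    (Fin m → ℂ) × (Fin n → ℂ) → ℂ :=
  wirtBar (fun q => (ρ q : ℂ)) (ez α)

/-- ρ_{jᾱ} -/
noncomputable def hessTbar (ρ : (Fin m → ℂ) × (Fin n → ℂ) → ℝ) (j : Fin m) (α : Fin n) :
    (Fin m → ℂ) × (Fin n → ℂ) → ℂ :=
  wirt (dzbar ρ α) (et j)

/-- ρ_{jk̄} -/
noncomputable def hessTT (ρ : (Fin m → ℂ) × (Fin n → ℂ) → ℝ) (j k : Fin m) :
    (Fin m → ℂ) × (Fin n → ℂ) → ℂ :=
  wirt (wirtBar (fun q => (ρ q : ℂ)) (et k)) (et j)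

/-- ρ_{k̄β} = ∂²ρ/∂t̄^k∂μ^β -/
noncomputable def hessBarT (ρ : (Fin m → ℂ) × (Fin n → ℂ) → ℝ) (k : Fin m) (β : Fin n) :
    (Fin m → ℂ) × (Fin n → ℂ) → ℂ :=
  wirtBar (dza ρ β) (et k)

/-- h_{αβ̄,j} = ∂h_{αβ̄}/∂t^j -/
noncomputable def dhj (h : (Fin m → ℂ) → Matrix (Fin n) (Fin n) ℂ) (j : Fin m)
    (α β : Fin n) : (Fin m → ℂ) → ℂ :=
  wirt (fun t => h t α β) (Pi.single j 1)

/-- h_{αβ̄,k̄} = ∂h_{αβ̄}/∂t̄^k -/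
noncomputable def dhkbar (h : (Fin m → ℂ) → Matrix (Fin n) (Fin n) ℂ) (k : Fin m)
    (α β : Fin n) : (Fin m → ℂ) → ℂ :=
  wirtBar (fun t => h t α β) (Pi.single k 1)

/-- h_{αβ̄,jk̄} -/
noncomputable def dhjkbar (h : (Fin m → ℂ) → Matrix (Fin n) (Fin n) ℂ) (j k : Fin m)
    (α β : Fin n) : (Fin m → ℂ) → ℂ :=
  wirtBar (dhj h j α β) (Pi.single k 1)

/-- ρ(t,z) = Σ h_{αβ̄}(t) z^α z̄^β − 1. -/
noncomputable def rho (h : (Fin m → ℂ) → Matrix (Fin n) (Fin n) ℂ) :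
    (Fin m → ℂ) × (Fin n → ℂ) → ℝ :=
  fun p => (∑ α, ∑ β, h p.1 α β * p.2 α * (starRingEnd ℂ) (p.2 β)).re - 1

/-! ### Auxiliary lemmas -/

section WirtGeneric

variable {E : Type*} [NormedAddCommGroup E] [NormedSpace ℂ E]

lemma wirt_sub_const (f : E → ℂ) (c : ℂ) (v p : E) :
    wirt (fun q => f q - c) v p = wirt f v p := by
  unfold wirt; rw [fderiv_sub_const]

lemma wirtBar_sub_const (f : E → ℂ) (c : ℂ) (v p : E) :
    wirtBar (fun q => f q - c) v p = wirtBar f v p := by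
  unfold wirtBar; rw [fderiv_sub_const]

lemma wirt_mul (f g : E → ℂ) (v p : E)
    (hf : DifferentiableAt ℝ f p) (hg : DifferentiableAt ℝ g p) :
    wirt (fun q => f q * g q) v p = wirt f v p * g p + f p * wirt g v p := by
  unfold wirt
  rw [fderiv_fun_mul hf hg]
  simp only [ContinuousLinearMap.add_apply, ContinuousLinearMap.smul_apply, smul_eq_mul]
  ring

lemma wirtBar_mul (f g : E → ℂ) (v p : E)
    (hf : DifferentiableAt ℝ f p) (hg : DifferentiableAt ℝ g p) :
    wirtBar (fun q => f q * g q) v p = wirtBar f v p * g p + f p * wirtBar g v p := by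
  unfold wirtBar
  rw [fderiv_fun_mul hf hg]
  simp only [ContinuousLinearMap.add_apply, ContinuousLinearMap.smul_apply, smul_eq_mul]
  ring

lemma wirt_double_sum {ι κ : Type*} [Fintype ι] [Fintype κ]
    (f : ι → κ → E → ℂ) (v p : E)
    (hf : ∀ a b, DifferentiableAt ℝ (f a b) p) :
    wirt (fun q => ∑ a, ∑ b, f a b q) v p = ∑ a, ∑ b, wirt (f a b) v p := by
  have e : fderiv ℝ (fun q => ∑ a, ∑ b, f a b q) p = ∑ a, ∑ b, fderiv ℝ (f a b) p := by
    have e1 : fderiv ℝ (fun q => ∑ a, ∑ b, f a b q) p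
        = ∑ a, fderiv ℝ (fun q => ∑ b, f a b q) p :=
      fderiv_fun_sum (fun a _ => DifferentiableAt.fun_sum (fun b _ => hf a b))
    rw [e1]
    exact Finset.sum_congr rfl fun a _ => fderiv_fun_sum (fun b _ => hf a b)
  unfold wirt
  rw [e]
  simp only [ContinuousLinearMap.sum_apply, Finset.mul_sum]
  rw [← Finset.sum_sub_distrib, Finset.sum_div]
  refine Finset.sum_congr rfl fun a _ => ?_
  rw [← Finset.sum_sub_distrib, Finset.sum_div]

lemma wirtBar_double_sum {ι κ : Type*} [Fintype ι] [Fintype κ]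
    (f : ι → κ → E → ℂ) (v p : E)
    (hf : ∀ a b, DifferentiableAt ℝ (f a b) p) :
    wirtBar (fun q => ∑ a, ∑ b, f a b q) v p = ∑ a, ∑ b, wirtBar (f a b) v p := by
  have e : fderiv ℝ (fun q => ∑ a, ∑ b, f a b q) p = ∑ a, ∑ b, fderiv ℝ (f a b) p := by
    have e1 : fderiv ℝ (fun q => ∑ a, ∑ b, f a b q) p
        = ∑ a, fderiv ℝ (fun q => ∑ b, f a b q) p :=
      fderiv_fun_sum (fun a _ => DifferentiableAt.fun_sum (fun b _ => hf a b))
    rw [e1]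
    exact Finset.sum_congr rfl fun a _ => fderiv_fun_sum (fun b _ => hf a b)
  unfold wirtBar
  rw [e]
  simp only [ContinuousLinearMap.sum_apply, Finset.mul_sum]
  rw [← Finset.sum_add_distrib, Finset.sum_div]
  refine Finset.sum_congr rfl fun a _ => ?_
  rw [← Finset.sum_add_distrib, Finset.sum_div]

lemma wirt_single_sum {ι : Type*} [Fintype ι]
    (f : ι → E → ℂ) (v p : E)
    (hf : ∀ a, DifferentiableAt ℝ (f a) p) :
    wirt (fun q => ∑ a, f a q) v p = ∑ a, wirt (f a) v p := by
  have e : fderiv ℝ (fun q => ∑ a, f a q) p = ∑ a, fderiv ℝ (f a) p :=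
    fderiv_fun_sum (fun a _ => hf a)
  unfold wirt
  rw [e]
  simp only [ContinuousLinearMap.sum_apply, Finset.mul_sum]
  rw [← Finset.sum_sub_distrib, Finset.sum_div]

lemma wirtBar_single_sum {ι : Type*} [Fintype ι]
    (f : ι → E → ℂ) (v p : E)
    (hf : ∀ a, DifferentiableAt ℝ (f a) p) :
    wirtBar (fun q => ∑ a, f a q) v p = ∑ a, wirtBar (f a) v p := by
  have e : fderiv ℝ (fun q => ∑ a, f a q) p = ∑ a, fderiv ℝ (f a) p :=
    fderiv_fun_sum (fun a _ => hf a)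
  unfold wirtBar
  rw [e]
  simp only [ContinuousLinearMap.sum_apply, Finset.mul_sum]
  rw [← Finset.sum_add_distrib, Finset.sum_div]

lemma contDiff_fderiv_apply (c : E → ℂ) (hc : ContDiff ℝ (⊤ : ℕ∞) c) (w : E) :
    ContDiff ℝ (⊤ : ℕ∞) fun p => fderiv ℝ c p w :=
  (hc.fderiv_right (by simp)).clm_apply contDiff_const

lemma contDiff_wirtBar (c : E → ℂ) (hc : ContDiff ℝ (⊤ : ℕ∞) c) (v : E) :
    ContDiff ℝ (⊤ : ℕ∞) (wirtBar c v) :=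
  ((contDiff_fderiv_apply c hc v).add
    (contDiff_const.mul (contDiff_fderiv_apply c hc (Complex.I • v)))).div_const 2

lemma fderiv_wirt_apply (c : E → ℂ) (hc : ContDiff ℝ (⊤ : ℕ∞) c) (v p x : E) :
    fderiv ℝ (wirt c v) p x
      = (fderiv ℝ (fun t => fderiv ℝ c t v) p x
          - Complex.I * fderiv ℝ (fun t => fderiv ℝ c t (Complex.I • v)) p x) / 2 := by
  have h1 : ∀ w : E, DifferentiableAt ℝ (fun t => fderiv ℝ c t w) p := fun w =>
    ((contDiff_fderiv_apply c hc w).differentiable (by simp)) p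
  have e : wirt c v = fun t =>
      (fderiv ℝ c t v - Complex.I * fderiv ℝ c t (Complex.I • v)) * (2 : ℂ)⁻¹ := by
    funext t
    show (fderiv ℝ c t v - Complex.I * fderiv ℝ c t (Complex.I • v)) / 2 = _
    rw [div_eq_mul_inv]
  rw [e, fderiv_mul_const ((h1 v).fun_sub ((h1 (Complex.I • v)).const_mul Complex.I)) ((2:ℂ)⁻¹),
    fderiv_fun_sub (h1 v) ((h1 (Complex.I • v)).const_mul Complex.I),
    fderiv_const_mul (h1 (Complex.I • v)) Complex.I]
  simp only [ContinuousLinearMap.smul_apply, ContinuousLinearMap.sub_apply, smul_eq_mul]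
  ring

lemma fderiv_wirtBar_apply (c : E → ℂ) (hc : ContDiff ℝ (⊤ : ℕ∞) c) (v p x : E) :
    fderiv ℝ (wirtBar c v) p x
      = (fderiv ℝ (fun t => fderiv ℝ c t v) p x
          + Complex.I * fderiv ℝ (fun t => fderiv ℝ c t (Complex.I • v)) p x) / 2 := by
  have h1 : ∀ w : E, DifferentiableAt ℝ (fun t => fderiv ℝ c t w) p := fun w =>
    ((contDiff_fderiv_apply c hc w).differentiable (by simp)) p
  have e : wirtBar c v = fun t =>
      (fderiv ℝ c t v + Complex.I * fderiv ℝ c t (Complex.I • v)) * (2 : ℂ)⁻¹ := by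
    funext t
    show (fderiv ℝ c t v + Complex.I * fderiv ℝ c t (Complex.I • v)) / 2 = _
    rw [div_eq_mul_inv]
  rw [e, fderiv_mul_const ((h1 v).fun_add ((h1 (Complex.I • v)).const_mul Complex.I)) ((2:ℂ)⁻¹),
    fderiv_fun_add (h1 v) ((h1 (Complex.I • v)).const_mul Complex.I),
    fderiv_const_mul (h1 (Complex.I • v)) Complex.I]
  simp only [ContinuousLinearMap.smul_apply, ContinuousLinearMap.add_apply, smul_eq_mul]
  ring

lemma wirt_wirtBar_comm (c : E → ℂ) (hc : ContDiff ℝ (⊤ : ℕ∞) c) (u v : E) (p : E) :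
    wirt (wirtBar c u) v p = wirtBar (wirt c v) u p := by
  have hd : DifferentiableAt ℝ (fderiv ℝ c) p :=
    ((hc.fderiv_right (m := (⊤ : ℕ∞)) (by simp)).differentiable (by simp)) p
  have e : ∀ w x : E, fderiv ℝ (fun t => fderiv ℝ c t w) p x
      = fderiv ℝ (fderiv ℝ c) p x w := by
    intro w x
    rw [fderiv_clm_apply hd (differentiableAt_const w)]
    simp
  have key : ∀ w x : E, fderiv ℝ (fun t => fderiv ℝ c t w) p x
      = fderiv ℝ (fun t => fderiv ℝ c t x) p w := by
    intro w x
    rw [e w x, e x w]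
    exact (hc.contDiffAt.isSymmSndFDerivAt (by rw [minSmoothness_of_isRCLikeNormedField]; exact WithTop.coe_le_coe.mpr (le_top : (2 : ℕ∞) ≤ ⊤))) x w
  have L : wirt (wirtBar c u) v p
      = ((fderiv ℝ (fun t => fderiv ℝ c t u) p v
            + Complex.I * fderiv ℝ (fun t => fderiv ℝ c t (Complex.I • u)) p v) / 2
        - Complex.I * ((fderiv ℝ (fun t => fderiv ℝ c t u) p (Complex.I • v)
            + Complex.I * fderiv ℝ (fun t => fderiv ℝ c t (Complex.I • u)) p (Complex.I • v)) / 2)) / 2 := by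
    unfold wirt
    rw [fderiv_wirtBar_apply c hc u p v, fderiv_wirtBar_apply c hc u p (Complex.I • v)]
  have R : wirtBar (wirt c v) u p
      = ((fderiv ℝ (fun t => fderiv ℝ c t v) p u
            - Complex.I * fderiv ℝ (fun t => fderiv ℝ c t (Complex.I • v)) p u) / 2
        + Complex.I * ((fderiv ℝ (fun t => fderiv ℝ c t v) p (Complex.I • u)
            - Complex.I * fderiv ℝ (fun t => fderiv ℝ c t (Complex.I • v)) p (Complex.I • u)) / 2)) / 2 := by
    unfold wirtBar
    rw [fderiv_wirt_apply c hc v p u, fderiv_wirt_apply c hc v p (Complex.I • u)]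
  rw [L, R, key u v, key (Complex.I • u) v, key u (Complex.I • v),
    key (Complex.I • u) (Complex.I • v)]
  ring

end WirtGeneric

section Atoms

variable {m n : ℕ}

local notation "PQ" => (Fin m → ℂ) × (Fin n → ℂ)

lemma conj_single (α γ : Fin n) :
    (starRingEnd ℂ) ((Pi.single α 1 : Fin n → ℂ) γ) = (Pi.single α 1 : Fin n → ℂ) γ := by
  rcases eq_or_ne γ α with rfl | hne
  · simp
  · simp [Pi.single_eq_of_ne hne]

lemma hasFDerivAt_coord (β : Fin n) (p : PQ) :
    HasFDerivAt (fun q : PQ => q.2 β)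
      ((ContinuousLinearMap.proj β).comp
        (ContinuousLinearMap.snd ℝ (Fin m → ℂ) (Fin n → ℂ))) p :=
  ((ContinuousLinearMap.proj β).comp
    (ContinuousLinearMap.snd ℝ (Fin m → ℂ) (Fin n → ℂ))).hasFDerivAt

lemma fderiv_coord (β : Fin n) (p v : PQ) :
    fderiv ℝ (fun q : PQ => q.2 β) p v = v.2 β := by
  rw [(hasFDerivAt_coord β p).fderiv]; rfl

lemma diff_coord (β : Fin n) (p : PQ) :
    DifferentiableAt ℝ (fun q : PQ => q.2 β) p :=
  (hasFDerivAt_coord β p).differentiableAt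

lemma hasFDerivAt_conj_coord (γ : Fin n) (p : PQ) :
    HasFDerivAt (fun q : PQ => (starRingEnd ℂ) (q.2 γ))
      (Complex.conjCLE.toContinuousLinearMap.comp
        ((ContinuousLinearMap.proj γ).comp
          (ContinuousLinearMap.snd ℝ (Fin m → ℂ) (Fin n → ℂ)))) p :=
  (Complex.conjCLE.toContinuousLinearMap.comp
    ((ContinuousLinearMap.proj γ).comp
      (ContinuousLinearMap.snd ℝ (Fin m → ℂ) (Fin n → ℂ)))).hasFDerivAt

lemma fderiv_conj_coord (γ : Fin n) (p v : PQ) :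
    fderiv ℝ (fun q : PQ => (starRingEnd ℂ) (q.2 γ)) p v = (starRingEnd ℂ) (v.2 γ) := by
  rw [(hasFDerivAt_conj_coord γ p).fderiv]; rfl

lemma diff_conj_coord (γ : Fin n) (p : PQ) :
    DifferentiableAt ℝ (fun q : PQ => (starRingEnd ℂ) (q.2 γ)) p :=
  (hasFDerivAt_conj_coord γ p).differentiableAt

lemma hasFDerivAt_coeff (c : (Fin m → ℂ) → ℂ) (p : PQ)
    (hc : DifferentiableAt ℝ c p.1) :
    HasFDerivAt (fun q : PQ => c q.1)
      ((fderiv ℝ c p.1).comp (ContinuousLinearMap.fst ℝ (Fin m → ℂ) (Fin n → ℂ))) p :=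
  hc.hasFDerivAt.comp p hasFDerivAt_fst

lemma fderiv_coeff (c : (Fin m → ℂ) → ℂ) (p : PQ)
    (hc : DifferentiableAt ℝ c p.1) (v : PQ) :
    fderiv ℝ (fun q : PQ => c q.1) p v = fderiv ℝ c p.1 v.1 := by
  rw [(hasFDerivAt_coeff c p hc).fderiv]; rfl

lemma diff_coeff (c : (Fin m → ℂ) → ℂ) (hc : ContDiff ℝ (⊤ : ℕ∞) c) (p : PQ) :
    DifferentiableAt ℝ (fun q : PQ => c q.1) p :=
  (hasFDerivAt_coeff c p ((hc.differentiable (by simp)) p.1)).differentiableAt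

lemma diff_cz (c : (Fin m → ℂ) → ℂ) (hc : ContDiff ℝ (⊤ : ℕ∞) c) (β : Fin n) (p : PQ) :
    DifferentiableAt ℝ (fun q : PQ => c q.1 * q.2 β) p :=
  (diff_coeff c hc p).mul (diff_coord β p)

lemma diff_czbar (c : (Fin m → ℂ) → ℂ) (hc : ContDiff ℝ (⊤ : ℕ∞) c) (γ : Fin n) (p : PQ) :
    DifferentiableAt ℝ (fun q : PQ => c q.1 * (starRingEnd ℂ) (q.2 γ)) p :=
  (diff_coeff c hc p).mul (diff_conj_coord γ p)

lemma diff_term (c : (Fin m → ℂ) → ℂ) (hc : ContDiff ℝ (⊤ : ℕ∞) c) (β γ : Fin n) (p : PQ) :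
    DifferentiableAt ℝ (fun q : PQ => c q.1 * q.2 β * (starRingEnd ℂ) (q.2 γ)) p :=
  (diff_cz c hc β p).mul (diff_conj_coord γ p)

-- atoms in direction ez
lemma wirt_coord_ez (β α : Fin n) (p : PQ) :
    wirt (fun q : PQ => q.2 β) (ez α) p = (Pi.single α 1 : Fin n → ℂ) β := by
  unfold wirt
  rw [fderiv_coord, fderiv_coord]
  simp only [ez, Prod.smul_snd, Pi.smul_apply, smul_eq_mul]
  linear_combination (-((Pi.single α 1 : Fin n → ℂ) β) / 2) * Complex.I_mul_I

lemma wirtBar_coord_ez (β α : Fin n) (p : PQ) :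
    wirtBar (fun q : PQ => q.2 β) (ez α) p = 0 := by
  unfold wirtBar
  rw [fderiv_coord, fderiv_coord]
  simp only [ez, Prod.smul_snd, Pi.smul_apply, smul_eq_mul]
  linear_combination (((Pi.single α 1 : Fin n → ℂ) β) / 2) * Complex.I_mul_I

lemma wirt_conj_ez (γ α : Fin n) (p : PQ) :
    wirt (fun q : PQ => (starRingEnd ℂ) (q.2 γ)) (ez α) p = 0 := by
  unfold wirt
  rw [fderiv_conj_coord, fderiv_conj_coord]
  simp only [ez, Prod.smul_snd, Pi.smul_apply, smul_eq_mul, map_mul, Complex.conj_I,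
    conj_single]
  linear_combination (((Pi.single α 1 : Fin n → ℂ) γ) / 2) * Complex.I_mul_I

lemma wirtBar_conj_ez (γ α : Fin n) (p : PQ) :
    wirtBar (fun q : PQ => (starRingEnd ℂ) (q.2 γ)) (ez α) p = (Pi.single α 1 : Fin n → ℂ) γ := by
  unfold wirtBar
  rw [fderiv_conj_coord, fderiv_conj_coord]
  simp only [ez, Prod.smul_snd, Pi.smul_apply, smul_eq_mul, map_mul, Complex.conj_I,
    conj_single]
  linear_combination (-((Pi.single α 1 : Fin n → ℂ) γ) / 2) * Complex.I_mul_I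

lemma wirt_coeff_ez (c : (Fin m → ℂ) → ℂ) (hc : ContDiff ℝ (⊤ : ℕ∞) c) (α : Fin n) (p : PQ) :
    wirt (fun q : PQ => c q.1) (ez α) p = 0 := by
  unfold wirt
  rw [fderiv_coeff c p ((hc.differentiable (by simp)) p.1),
    fderiv_coeff c p ((hc.differentiable (by simp)) p.1)]
  simp [ez]

lemma wirtBar_coeff_ez (c : (Fin m → ℂ) → ℂ) (hc : ContDiff ℝ (⊤ : ℕ∞) c) (α : Fin n) (p : PQ) :
    wirtBar (fun q : PQ => c q.1) (ez α) p = 0 := by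
  unfold wirtBar
  rw [fderiv_coeff c p ((hc.differentiable (by simp)) p.1),
    fderiv_coeff c p ((hc.differentiable (by simp)) p.1)]
  simp [ez]

-- atoms in direction et
lemma wirt_coord_et (β : Fin n) (j : Fin m) (p : PQ) :
    wirt (fun q : PQ => q.2 β) (et j) p = 0 := by
  unfold wirt
  rw [fderiv_coord, fderiv_coord]
  simp [et]

lemma wirtBar_coord_et (β : Fin n) (j : Fin m) (p : PQ) :
    wirtBar (fun q : PQ => q.2 β) (et j) p = 0 := by
  unfold wirtBar
  rw [fderiv_coord, fderiv_coord]
  simp [et]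

lemma wirt_conj_et (γ : Fin n) (j : Fin m) (p : PQ) :
    wirt (fun q : PQ => (starRingEnd ℂ) (q.2 γ)) (et j) p = 0 := by
  unfold wirt
  rw [fderiv_conj_coord, fderiv_conj_coord]
  simp [et]

lemma wirtBar_conj_et (γ : Fin n) (j : Fin m) (p : PQ) :
    wirtBar (fun q : PQ => (starRingEnd ℂ) (q.2 γ)) (et j) p = 0 := by
  unfold wirtBar
  rw [fderiv_conj_coord, fderiv_conj_coord]
  simp [et]

lemma wirt_coeff_et (c : (Fin m → ℂ) → ℂ) (hc : ContDiff ℝ (⊤ : ℕ∞) c) (j : Fin m) (p : PQ) :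
    wirt (fun q : PQ => c q.1) (et j) p = wirt c (Pi.single j 1) p.1 := by
  unfold wirt
  rw [fderiv_coeff c p ((hc.differentiable (by simp)) p.1),
    fderiv_coeff c p ((hc.differentiable (by simp)) p.1)]
  simp [et, Prod.smul_fst]

lemma wirtBar_coeff_et (c : (Fin m → ℂ) → ℂ) (hc : ContDiff ℝ (⊤ : ℕ∞) c) (j : Fin m) (p : PQ) :
    wirtBar (fun q : PQ => c q.1) (et j) p = wirtBar c (Pi.single j 1) p.1 := by
  unfold wirtBar
  rw [fderiv_coeff c p ((hc.differentiable (by simp)) p.1),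
    fderiv_coeff c p ((hc.differentiable (by simp)) p.1)]
  simp [et, Prod.smul_fst]

-- composite term derivatives
lemma wirt_term_ez (c : (Fin m → ℂ) → ℂ) (hc : ContDiff ℝ (⊤ : ℕ∞) c) (β γ α : Fin n) (p : PQ) :
    wirt (fun q : PQ => c q.1 * q.2 β * (starRingEnd ℂ) (q.2 γ)) (ez α) p
      = c p.1 * (Pi.single α 1 : Fin n → ℂ) β * (starRingEnd ℂ) (p.2 γ) := by
  rw [wirt_mul (fun q : PQ => c q.1 * q.2 β) (fun q : PQ => (starRingEnd ℂ) (q.2 γ))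
      (ez α) p (diff_cz c hc β p) (diff_conj_coord γ p),
    wirt_mul (fun q : PQ => c q.1) (fun q : PQ => q.2 β)
      (ez α) p (diff_coeff c hc p) (diff_coord β p),
    wirt_coeff_ez c hc α p, wirt_coord_ez β α p, wirt_conj_ez γ α p]
  ring

lemma wirtBar_term_ez (c : (Fin m → ℂ) → ℂ) (hc : ContDiff ℝ (⊤ : ℕ∞) c) (β γ α : Fin n) (p : PQ) :
    wirtBar (fun q : PQ => c q.1 * q.2 β * (starRingEnd ℂ) (q.2 γ)) (ez α) p
      = c p.1 * p.2 β * (Pi.single α 1 : Fin n → ℂ) γ := by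
  rw [wirtBar_mul (fun q : PQ => c q.1 * q.2 β) (fun q : PQ => (starRingEnd ℂ) (q.2 γ))
      (ez α) p (diff_cz c hc β p) (diff_conj_coord γ p),
    wirtBar_mul (fun q : PQ => c q.1) (fun q : PQ => q.2 β)
      (ez α) p (diff_coeff c hc p) (diff_coord β p),
    wirtBar_coeff_ez c hc α p, wirtBar_coord_ez β α p, wirtBar_conj_ez γ α p]
  ring

lemma wirt_term_et (c : (Fin m → ℂ) → ℂ) (hc : ContDiff ℝ (⊤ : ℕ∞) c) (β γ : Fin n)
    (j : Fin m) (p : PQ) :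
    wirt (fun q : PQ => c q.1 * q.2 β * (starRingEnd ℂ) (q.2 γ)) (et j) p
      = wirt c (Pi.single j 1) p.1 * p.2 β * (starRingEnd ℂ) (p.2 γ) := by
  rw [wirt_mul (fun q : PQ => c q.1 * q.2 β) (fun q : PQ => (starRingEnd ℂ) (q.2 γ))
      (et j) p (diff_cz c hc β p) (diff_conj_coord γ p),
    wirt_mul (fun q : PQ => c q.1) (fun q : PQ => q.2 β)
      (et j) p (diff_coeff c hc p) (diff_coord β p),
    wirt_coeff_et c hc j p, wirt_coord_et β j p, wirt_conj_et γ j p]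
  ring

lemma wirtBar_term_et (c : (Fin m → ℂ) → ℂ) (hc : ContDiff ℝ (⊤ : ℕ∞) c) (β γ : Fin n)
    (k : Fin m) (p : PQ) :
    wirtBar (fun q : PQ => c q.1 * q.2 β * (starRingEnd ℂ) (q.2 γ)) (et k) p
      = wirtBar c (Pi.single k 1) p.1 * p.2 β * (starRingEnd ℂ) (p.2 γ) := by
  rw [wirtBar_mul (fun q : PQ => c q.1 * q.2 β) (fun q : PQ => (starRingEnd ℂ) (q.2 γ))
      (et k) p (diff_cz c hc β p) (diff_conj_coord γ p),
    wirtBar_mul (fun q : PQ => c q.1) (fun q : PQ => q.2 β)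
      (et k) p (diff_coeff c hc p) (diff_coord β p),
    wirtBar_coeff_et c hc k p, wirtBar_coord_et β k p, wirtBar_conj_et γ k p]
  ring

lemma wirt_cz_et (c : (Fin m → ℂ) → ℂ) (hc : ContDiff ℝ (⊤ : ℕ∞) c) (β : Fin n)
    (j : Fin m) (p : PQ) :
    wirt (fun q : PQ => c q.1 * q.2 β) (et j) p
      = wirt c (Pi.single j 1) p.1 * p.2 β := by
  rw [wirt_mul (fun q : PQ => c q.1) (fun q : PQ => q.2 β)
      (et j) p (diff_coeff c hc p) (diff_coord β p),
    wirt_coeff_et c hc j p, wirt_coord_et β j p]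
  ring

lemma wirtBar_czbar_et (c : (Fin m → ℂ) → ℂ) (hc : ContDiff ℝ (⊤ : ℕ∞) c) (γ : Fin n)
    (k : Fin m) (p : PQ) :
    wirtBar (fun q : PQ => c q.1 * (starRingEnd ℂ) (q.2 γ)) (et k) p
      = wirtBar c (Pi.single k 1) p.1 * (starRingEnd ℂ) (p.2 γ) := by
  rw [wirtBar_mul (fun q : PQ => c q.1) (fun q : PQ => (starRingEnd ℂ) (q.2 γ))
      (et k) p (diff_coeff c hc p) (diff_conj_coord γ p),
    wirtBar_coeff_et c hc k p, wirtBar_conj_et γ k p]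
  ring

end Atoms

section Rho

variable {m n : ℕ}

local notation "PQ" => (Fin m → ℂ) × (Fin n → ℂ)

variable (h : (Fin m → ℂ) → Matrix (Fin n) (Fin n) ℂ)

lemma rho_eq (hherm : ∀ t, (h t).IsHermitian) :
    (fun q : PQ => ((rho h q : ℝ) : ℂ))
      = fun q : PQ => (∑ α, ∑ β, h q.1 α β * q.2 α * (starRingEnd ℂ) (q.2 β)) - 1 := by
  funext q
  have hconj : (starRingEnd ℂ)
      (∑ α, ∑ β, h q.1 α β * q.2 α * (starRingEnd ℂ) (q.2 β))
      = ∑ α, ∑ β, h q.1 α β * q.2 α * (starRingEnd ℂ) (q.2 β) := by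
    calc (starRingEnd ℂ) (∑ α, ∑ β, h q.1 α β * q.2 α * (starRingEnd ℂ) (q.2 β))
        = ∑ α, ∑ β, (starRingEnd ℂ) (h q.1 α β) * (starRingEnd ℂ) (q.2 α) * q.2 β := by
          simp [map_sum, map_mul]
      _ = ∑ α, ∑ β, h q.1 β α * q.2 β * (starRingEnd ℂ) (q.2 α) := by
          refine Finset.sum_congr rfl fun α _ => Finset.sum_congr rfl fun β _ => ?_
          rw [show (starRingEnd ℂ) (h q.1 α β) = h q.1 β α from (hherm q.1).apply β α]
          ring
      _ = ∑ α, ∑ β, h q.1 α β * q.2 α * (starRingEnd ℂ) (q.2 β) := Finset.sum_comm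
  unfold rho
  push_cast
  rw [Complex.conj_eq_iff_re.mp hconj]

lemma dzbar_rho (hsm : ∀ α β, ContDiff ℝ (⊤ : ℕ∞) fun t => h t α β)
    (hherm : ∀ t, (h t).IsHermitian) (α : Fin n) :
    dzbar (rho h) α = fun p : PQ => ∑ a, h p.1 a α * p.2 a := by
  funext p
  unfold dzbar
  rw [rho_eq h hherm, wirtBar_sub_const, wirtBar_double_sum
    (fun a b (q : PQ) => h q.1 a b * q.2 a * (starRingEnd ℂ) (q.2 b)) (ez α) p
    (fun a b => diff_term _ (hsm a b) a b p)]
  calc ∑ a, ∑ b, wirtBar (fun q : PQ => h q.1 a b * q.2 a * (starRingEnd ℂ) (q.2 b)) (ez α) p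
      = ∑ a, ∑ b, h p.1 a b * p.2 a * (Pi.single α 1 : Fin n → ℂ) b :=
        Finset.sum_congr rfl fun a _ => Finset.sum_congr rfl fun b _ =>
          wirtBar_term_ez (fun t => h t a b) (hsm a b) a b α p
    _ = ∑ a, h p.1 a α * p.2 a := by
        refine Finset.sum_congr rfl fun a _ => ?_
        simp [Pi.single_apply, mul_ite, mul_one, mul_zero]

lemma dza_rho (hsm : ∀ α β, ContDiff ℝ (⊤ : ℕ∞) fun t => h t α β)
    (hherm : ∀ t, (h t).IsHermitian) (β : Fin n) :
    dza (rho h) β = fun p : PQ => ∑ b, h p.1 β b * (starRingEnd ℂ) (p.2 b) := by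
  funext p
  unfold dza
  rw [rho_eq h hherm, wirt_sub_const, wirt_double_sum
    (fun a b (q : PQ) => h q.1 a b * q.2 a * (starRingEnd ℂ) (q.2 b)) (ez β) p
    (fun a b => diff_term _ (hsm a b) a b p)]
  calc ∑ a, ∑ b, wirt (fun q : PQ => h q.1 a b * q.2 a * (starRingEnd ℂ) (q.2 b)) (ez β) p
      = ∑ a, ∑ b, h p.1 a b * (Pi.single β 1 : Fin n → ℂ) a * (starRingEnd ℂ) (p.2 b) :=
        Finset.sum_congr rfl fun a _ => Finset.sum_congr rfl fun b _ =>
          wirt_term_ez (fun t => h t a b) (hsm a b) a b β p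
    _ = ∑ b, h p.1 β b * (starRingEnd ℂ) (p.2 b) := by
        rw [Finset.sum_comm]
        refine Finset.sum_congr rfl fun b _ => ?_
        simp [Pi.single_apply, mul_ite, mul_one, mul_zero, ite_mul, zero_mul]

lemma hessTbar_rho (hsm : ∀ α β, ContDiff ℝ (⊤ : ℕ∞) fun t => h t α β)
    (hherm : ∀ t, (h t).IsHermitian) (j : Fin m) (α : Fin n) (p : PQ) :
    hessTbar (rho h) j α p = ∑ a, dhj h j a α p.1 * p.2 a := by
  unfold hessTbar
  rw [dzbar_rho h hsm hherm α, wirt_single_sum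
    (fun a (q : PQ) => h q.1 a α * q.2 a) (et j) p
    (fun a => diff_cz _ (hsm a α) a p)]
  exact Finset.sum_congr rfl fun a _ => wirt_cz_et (fun t => h t a α) (hsm a α) a j p

lemma hessBarT_rho (hsm : ∀ α β, ContDiff ℝ (⊤ : ℕ∞) fun t => h t α β)
    (hherm : ∀ t, (h t).IsHermitian) (k : Fin m) (β : Fin n) (p : PQ) :
    hessBarT (rho h) k β p = ∑ b, dhkbar h k β b p.1 * (starRingEnd ℂ) (p.2 b) := by
  unfold hessBarT
  rw [dza_rho h hsm hherm β, wirtBar_single_sum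
    (fun b (q : PQ) => h q.1 β b * (starRingEnd ℂ) (q.2 b)) (et k) p
    (fun b => diff_czbar _ (hsm β b) b p)]
  exact Finset.sum_congr rfl fun b _ =>
    wirtBar_czbar_et (fun t => h t β b) (hsm β b) b k p

lemma wirtBar_rho_et (hsm : ∀ α β, ContDiff ℝ (⊤ : ℕ∞) fun t => h t α β)
    (hherm : ∀ t, (h t).IsHermitian) (k : Fin m) :
    wirtBar (fun q : PQ => ((rho h q : ℝ) : ℂ)) (et k)
      = fun p : PQ => ∑ a, ∑ b, dhkbar h k a b p.1 * p.2 a * (starRingEnd ℂ) (p.2 b) := by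
  funext p
  rw [rho_eq h hherm, wirtBar_sub_const, wirtBar_double_sum
    (fun a b (q : PQ) => h q.1 a b * q.2 a * (starRingEnd ℂ) (q.2 b)) (et k) p
    (fun a b => diff_term _ (hsm a b) a b p)]
  exact Finset.sum_congr rfl fun a _ => Finset.sum_congr rfl fun b _ =>
    wirtBar_term_et (fun t => h t a b) (hsm a b) a b k p

lemma hessTT_rho (hsm : ∀ α β, ContDiff ℝ (⊤ : ℕ∞) fun t => h t α β)
    (hherm : ∀ t, (h t).IsHermitian) (j k : Fin m) (p : PQ) :
    hessTT (rho h) j k p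
      = ∑ a, ∑ b, dhjkbar h j k a b p.1 * p.2 a * (starRingEnd ℂ) (p.2 b) := by
  unfold hessTT
  rw [wirtBar_rho_et h hsm hherm k, wirt_double_sum
    (fun a b (q : PQ) => dhkbar h k a b q.1 * q.2 a * (starRingEnd ℂ) (q.2 b)) (et j) p
    (fun a b => diff_term _ (contDiff_wirtBar (fun t => h t a b) (hsm a b) (Pi.single k 1)) a b p)]
  refine Finset.sum_congr rfl fun a _ => Finset.sum_congr rfl fun b _ => ?_
  rw [wirt_term_et (dhkbar h k a b)
    (contDiff_wirtBar (fun t => h t a b) (hsm a b) (Pi.single k 1)) a b j p]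
  have e : wirt (dhkbar h k a b) (Pi.single j 1) p.1 = dhjkbar h j k a b p.1 :=
    wirt_wirtBar_comm (fun t => h t a b) (hsm a b) (Pi.single k 1) (Pi.single j 1) p.1
  rw [e]

end Rho

lemma sum4_swap {n : ℕ} (f : Fin n → Fin n → Fin n → Fin n → ℂ) :
    (∑ a, ∑ b, ∑ l, ∑ v, f a b l v) = ∑ l, ∑ v, ∑ a, ∑ b, f a b l v := by
  have h1 : ∀ a : Fin n, (∑ b, ∑ l, ∑ v, f a b l v) = ∑ l, ∑ b, ∑ v, f a b l v :=
    fun a => Finset.sum_comm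
  simp_rw [h1]
  rw [Finset.sum_comm]
  refine Finset.sum_congr rfl fun l _ => ?_
  have h2 : ∀ a : Fin n, (∑ b, ∑ v, f a b l v) = ∑ v, ∑ b, f a b l v :=
    fun a => Finset.sum_comm
  simp_rw [h2]
  rw [Finset.sum_comm]

lemma quad {n : ℕ} (A H C : Fin n → Fin n → ℂ) (z w : Fin n → ℂ) :
    (∑ α, ∑ β, (∑ l, A l α * z l) * H α β * (∑ v, C β v * w v))
      = ∑ α, ∑ β, (∑ l, ∑ v, A α l * H l v * C v β) * z α * w β := by
  have step1 : (∑ α, ∑ β, (∑ l, A l α * z l) * H α β * (∑ v, C β v * w v))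
      = ∑ α, ∑ β, ∑ l, ∑ v, A l α * z l * H α β * (C β v * w v) := by
    refine Finset.sum_congr rfl fun α _ => Finset.sum_congr rfl fun β _ => ?_
    rw [Finset.sum_mul, Finset.sum_mul]
    refine Finset.sum_congr rfl fun l _ => ?_
    rw [Finset.mul_sum]
  rw [step1, sum4_swap]
  refine Finset.sum_congr rfl fun l _ => Finset.sum_congr rfl fun v _ => ?_
  rw [Finset.sum_mul, Finset.sum_mul]
  refine Finset.sum_congr rfl fun α _ => ?_
  rw [Finset.sum_mul, Finset.sum_mul]
  refine Finset.sum_congr rfl fun β _ => ?_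
  ring

/-- the geodesic curvature θ_{jk̄}(ρ) = ρ_{jk̄} − Σ ρ_{jᾱ}ρ^{ᾱβ}ρ_{k̄β}
    of the family of unit-sphere boundaries equals
    Σ_{α,β} (h_{αβ̄,jk̄} − Σ_{λ,ν} h_{αλ̄,j} h^{λ̄ν} h_{νβ̄,k̄}) z^α z̄^β. -/
theorem geodesic_curvature_of_hermitian_norms
    (h : (Fin m → ℂ) → Matrix (Fin n) (Fin n) ℂ)
    (hsm : ∀ α β, ContDiff ℝ (⊤ : ℕ∞) fun t => h t α β)
    (hherm : ∀ t, (h t).IsHermitian) (hpd : ∀ t, (h t).PosDef)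
    (t : Fin m → ℂ) (z : Fin n → ℂ) (j k : Fin m)
    (Hinv : Matrix (Fin n) (Fin n) ℂ)
    (hH1 : h t * Hinv = 1) (hH2 : Hinv * h t = 1) :
    hessTT (rho h) j k (t, z) -
        (∑ α, ∑ β, hessTbar (rho h) j α (t, z) * Hinv α β * hessBarT (rho h) k β (t, z)) =
      ∑ α, ∑ β,
        (dhjkbar h j k α β t -
          ∑ lam, ∑ ν, dhj h j α lam t * Hinv lam ν * dhkbar h k ν β t) *
          z α * (starRingEnd ℂ) (z β) := by
  rw [hessTT_rho h hsm hherm j k (t, z)]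
  have e1 : ∀ α, hessTbar (rho h) j α (t, z) = ∑ a, dhj h j a α t * z a :=
    fun α => hessTbar_rho h hsm hherm j α (t, z)
  have e2 : ∀ β, hessBarT (rho h) k β (t, z)
      = ∑ b, dhkbar h k β b t * (starRingEnd ℂ) (z b) :=
    fun β => hessBarT_rho h hsm hherm k β (t, z)
  simp_rw [e1, e2]
  rw [quad (fun l a => dhj h j l a t) (fun a b => Hinv a b)
    (fun b v => dhkbar h k b v t) z (fun b => (starRingEnd ℂ) (z b))]
  rw [← Finset.sum_sub_distrib]
  refine Finset.sum_congr rfl fun a _ => ?_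
  rw [← Finset.sum_sub_distrib]
  refine Finset.sum_congr rfl fun b _ => ?_
  ring

end Stmt11
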